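/- arXiv:1610.04664 — 2 statements merged into one kernel-verified Lean document; each statement's English description precedes it below -/
import Mathlib

section
/- Let μ ∈ ℂ with Re(μ) outside the interval [2 min_Ω(ν)/max_Ω(ρc²), 2 max_Ω(ν)/min_Ω(ρc²)] or Im(μ) ≠ 0. Suppose T₁ f = μ f for some f ∈ G with f ≠ 0, where a(T₁f, v) = 2∫ν div f div v̄, a(u,v) = ∫ρc² div u div v̄, and ‖div·‖ is a norm on G. Then we reach a contradiction: necessarily μ = 2∫ν|div f|² / ∫ρc²|div f|², which is a real number in [2 min(ν)/max(ρc²), 2 max(ν)/min(ρc²)]. -/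
open MeasureTheory Complex

/-! Testing the eigenvalue equation against `f` turns both sesquilinear forms into integrals
of `|div f|²` against the real weights `ν` and `ρc²`, so `μc` is the real Rayleigh quotient
`2 ∫ ν |F|² / ∫ q |F|²`. Squeezing the weights between their bounds squeezes the numerator
and the denominator between multiples of `∫ |F|² > 0`, which places the quotient in the
interval. -/

section

variable {Ω : Type*} [MeasurableSpace Ω] {μ : Measure Ω}

theorem integral_ofReal_mul_mul_conj (g : Ω → ℝ) (F : Ω → ℂ) :
    ∫ x, (g x : ℂ) * (F x * starRingEnd ℂ (F x)) ∂μ =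
      ((∫ x, g x * ‖F x‖ ^ 2 ∂μ : ℝ) : ℂ) := by
  rw [← integral_complex_ofReal]
  congr 1 with x
  rw [mul_conj']
  push_cast
  ring

theorem integral_mul_mem_Icc_of_ae_mem_Icc {w f : Ω → ℝ} {a b : ℝ}
    (hw : ∀ᵐ x ∂μ, w x ∈ Set.Icc a b) (hf : 0 ≤ f) (hf_int : Integrable f μ)
    (hwf_int : Integrable (fun x => w x * f x) μ) :
    ∫ x, w x * f x ∂μ ∈ Set.Icc (a * ∫ x, f x ∂μ) (b * ∫ x, f x ∂μ) := by
  rw [← integral_const_mul, ← integral_const_mul]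
  constructor
  · refine integral_mono_ae (hf_int.const_mul a) hwf_int ?_
    filter_upwards [hw] with x hx using mul_le_mul_of_nonneg_right hx.1 (hf x)
  · refine integral_mono_ae hwf_int (hf_int.const_mul b) ?_
    filter_upwards [hw] with x hx using mul_le_mul_of_nonneg_right hx.2 (hf x)

end

theorem div_mem_Icc_of_mem_Icc_mul {A B I a b c d : ℝ} (hI : 0 < I) (ha : 0 ≤ a) (hc : 0 < c)
    (hB : B ∈ Set.Icc (a * I) (b * I)) (hA : A ∈ Set.Icc (c * I) (d * I)) :
    B / A ∈ Set.Icc (a / d) (b / c) := by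
  obtain ⟨hB_lo, hB_hi⟩ := hB
  obtain ⟨hA_lo, hA_hi⟩ := hA
  have hA_pos : 0 < A := (mul_pos hc hI).trans_le hA_lo
  have hd : 0 < d := pos_of_mul_pos_left (hA_pos.trans_le hA_hi) hI.le
  constructor
  · rw [div_le_div_iff₀ hd hA_pos]
    nlinarith
  · have hb : 0 ≤ b :=
      nonneg_of_mul_nonneg_left ((mul_nonneg ha hI.le).trans (hB_lo.trans hB_hi)) hI
    rw [div_le_div_iff₀ hA_pos hc]
    nlinarith [mul_le_mul_of_nonneg_left hA_lo hb]

theorem eigenvalue_outside_interval_contradiction_general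
    {Ω : Type*} [MeasurableSpace Ω] (μ : Measure Ω)
    (ν q : Ω → ℝ) (F : Ω → ℂ)
    (νmin νmax : ℝ) (hνmin : 0 ≤ νmin) (hνbd : ∀ x, νmin ≤ ν x ∧ ν x ≤ νmax)
    (qmin qmax : ℝ) (hqmin : 0 < qmin) (hqbd : ∀ x, qmin ≤ q x ∧ q x ≤ qmax)
    (hintq : Integrable (fun x => q x * ‖F x‖ ^ 2) μ)
    (hintν : Integrable (fun x => ν x * ‖F x‖ ^ 2) μ)
    (hFpos : 0 < ∫ x, ‖F x‖ ^ 2 ∂μ)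
    (μc : ℂ)
    (heig : μc * ∫ x, ((q x : ℂ) * (F x * starRingEnd ℂ (F x))) ∂μ =
      2 * ∫ x, ((ν x : ℂ) * (F x * starRingEnd ℂ (F x))) ∂μ)
    (hout : μc.im ≠ 0 ∨ μc.re < 2 * νmin / qmax ∨ 2 * νmax / qmin < μc.re) :
    False := by
  rw [integral_ofReal_mul_mul_conj, integral_ofReal_mul_mul_conj] at heig
  have hF_int : Integrable (fun x => ‖F x‖ ^ 2) μ := .of_integral_ne_zero hFpos.ne'
  have hF_nonneg : 0 ≤ fun x => ‖F x‖ ^ 2 := fun x => by positivity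
  have hA := integral_mul_mem_Icc_of_ae_mem_Icc (ae_of_all μ hqbd) hF_nonneg hF_int hintq
  have hB := integral_mul_mem_Icc_of_ae_mem_Icc (ae_of_all μ hνbd) hF_nonneg hF_int hintν
  have hA_ne : (∫ x, q x * ‖F x‖ ^ 2 ∂μ) ≠ 0 := ((mul_pos hqmin hFpos).trans_le hA.1).ne'
  have hμc :
      μc = ((2 * ((∫ x, ν x * ‖F x‖ ^ 2 ∂μ) / ∫ x, q x * ‖F x‖ ^ 2 ∂μ) : ℝ) : ℂ) := by
    rw [← mul_div_assoc, ofReal_div, eq_div_iff (ofReal_ne_zero.mpr hA_ne)]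
    exact_mod_cast heig
  obtain ⟨h_lo, h_hi⟩ := div_mem_Icc_of_mem_Icc_mul hFpos hνmin hqmin hB hA
  rw [hμc, ofReal_im, ofReal_re, mul_div_assoc, mul_div_assoc] at hout
  rcases hout with h | h | h
  · exact h rfl
  · linarith
  · linarith

/-- Injectivity part of the localization of `sp(T₁)`: if `T₁ f = μc f` with
`f ≠ 0`, testing the eigenvalue equation with `f` gives
`μc ∫ q |div f|² = 2 ∫ ν |div f|²` (here `F = div f` and `q = ρc²`), so
`μc` is the real Rayleigh quotient `2∫ν|F|²/∫q|F|²`, which lies in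
`[2 min ν / max q, 2 max ν / min q]`; hence if `μc` has nonzero imaginary
part or real part outside that interval, we reach a contradiction. -/
theorem eigenvalue_outside_interval_contradiction
    {Ω : Type*} [MeasurableSpace Ω] (μ : Measure Ω)
    (ν q : Ω → ℝ) (F : Ω → ℂ)
    (νmin νmax : ℝ) (hνmin : 0 ≤ νmin) (hνbd : ∀ x, νmin ≤ ν x ∧ ν x ≤ νmax)
    (qmin qmax : ℝ) (hqmin : 0 < qmin) (hqbd : ∀ x, qmin ≤ q x ∧ q x ≤ qmax)
    (hintq : Integrable (fun x => q x * ‖F x‖ ^ 2) μ)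
    (hintν : Integrable (fun x => ν x * ‖F x‖ ^ 2) μ)
    (hintF : Integrable (fun x => ‖F x‖ ^ 2) μ)
    (hFpos : 0 < ∫ x, ‖F x‖ ^ 2 ∂μ)
    (μc : ℂ)
    (heig : μc * ∫ x, ((q x : ℂ) * (F x * starRingEnd ℂ (F x))) ∂μ =
      2 * ∫ x, ((ν x : ℂ) * (F x * starRingEnd ℂ (F x))) ∂μ)
    (hout : μc.im ≠ 0 ∨ μc.re < 2 * νmin / qmax ∨ 2 * νmax / qmin < μc.re) :
    False :=
  eigenvalue_outside_interval_contradiction_general μ ν q F νmin νmax hνmin hνbd qmin qmax hqmin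
    hqbd hintq hintν hFpos μc heig hout
end

section
/- Let V_h ⊂ V be a finite-dimensional subspace with orthogonal decomposition V_h = G_h ⊕ K_h (K_h = K ∩ V_h, K the kernel of div in V). Suppose every v_h ∈ G_h admits a decomposition v_h = w + χ with w ∈ H^s(Ω)^d ∩ V, χ ∈ K, ‖w‖_{s,Ω} ≤ C‖div v_h‖_{0,Ω} and ‖χ‖_{0,Ω} ≤ C h^s ‖div v_h‖_{0,Ω}. Then the form a(u,v) = ∫ρc² div u div v̄ is uniformly G_h-elliptic: there exists c > 0 independent of h with a(v_h, v_h) ≥ c‖v_h‖²_{H(div,Ω)} for all v_h ∈ G_h. -/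
/-! The decomposition `v = w + χ` gives the discrete Friedrichs-type bound `‖v‖ ≤ 2C‖D v‖`
uniformly in `h ∈ (0,1]`, since `h ^ s ≤ 1`. Hence `‖v‖² + ‖D v‖² ≤ (4C² + 1)‖D v‖²`, and the
lower bound `a(v,v) ≥ qmin ‖D v‖²` yields ellipticity with constant `qmin / (4C² + 1)`. -/

theorem norm_le_two_mul_of_eq_add {E : Type*} [SeminormedAddCommGroup E] {v w χ : E}
    {B t : ℝ} (hv : v = w + χ) (hw : ‖w‖ ≤ B) (hχ : ‖χ‖ ≤ t * B) (ht : t ≤ 1) :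
    ‖v‖ ≤ 2 * B := by
  have hB : 0 ≤ B := (norm_nonneg w).trans hw
  calc ‖v‖ ≤ ‖w‖ + ‖χ‖ := hv ▸ norm_add_le w χ
    _ ≤ B + 1 * B := add_le_add hw (hχ.trans (mul_le_mul_of_nonneg_right ht hB))
    _ = 2 * B := by ring

theorem div_sq_add_one_mul_sq_add_sq_le {q K x y A : ℝ} (hq : 0 ≤ q) (hx : 0 ≤ x)
    (hxy : x ≤ K * y) (hA : q * y ^ 2 ≤ A) :
    q / (K ^ 2 + 1) * (x ^ 2 + y ^ 2) ≤ A := by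
  have hx2 : x ^ 2 ≤ K ^ 2 * y ^ 2 := by
    simpa only [mul_pow] using pow_le_pow_left₀ hx hxy 2
  calc q / (K ^ 2 + 1) * (x ^ 2 + y ^ 2)
      ≤ q / (K ^ 2 + 1) * ((K ^ 2 + 1) * y ^ 2) := by gcongr; linarith
    _ = q * y ^ 2 := by field_simp
    _ ≤ A := hA

theorem discrete_uniform_ellipticity_general
    {Hf Hs : Type*} [NormedAddCommGroup Hf] [InnerProductSpace ℂ Hf]
    [NormedAddCommGroup Hs] [InnerProductSpace ℂ Hs]
    (D : Hf →ₗ[ℂ] Hs)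
    (Gh : ℝ → Submodule ℂ Hf)
    (a : Hf → Hf → ℂ) (qmin : ℝ) (hqmin : 0 < qmin)
    (ha : ∀ v : Hf, qmin * ‖D v‖ ^ 2 ≤ (a v v).re)
    (C s : ℝ) (hs : 0 < s)
    (hdecomp : ∀ h ∈ Set.Ioc (0 : ℝ) 1, ∀ v ∈ Gh h,
      ∃ w χ : Hf, v = w + χ ∧ D χ = 0 ∧
        ‖w‖ ≤ C * ‖D v‖ ∧ ‖χ‖ ≤ C * h ^ s * ‖D v‖) :
    ∃ c > 0, ∀ h ∈ Set.Ioc (0 : ℝ) 1, ∀ v ∈ Gh h,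
      c * (‖v‖ ^ 2 + ‖D v‖ ^ 2) ≤ (a v v).re := by
  refine ⟨qmin / ((2 * C) ^ 2 + 1), by positivity, fun h hh v hv => ?_⟩
  obtain ⟨w, χ, hvwχ, -, hw, hχ⟩ := hdecomp h hh v hv
  have hhs : h ^ s ≤ 1 := Real.rpow_le_one hh.1.le hh.2 hs.le
  have hv_le : ‖v‖ ≤ 2 * C * ‖D v‖ := by
    rw [mul_assoc]
    exact norm_le_two_mul_of_eq_add hvwχ hw (hχ.trans_eq (by ring)) hhs
  exact div_sq_add_one_mul_sq_add_sq_le hqmin.le (norm_nonneg v) hv_le (ha v)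

/-- Uniform discrete ellipticity (Lemma 4.2): if every `v_h` in the discrete
space `G_h` (for mesh size `h ∈ (0,1]`) admits a Helmholtz-type decomposition
`v_h = w + χ` with `D χ = 0` (i.e. `χ` divergence free), `‖w‖ ≤ C‖D v_h‖` and
`‖χ‖ ≤ C h^s ‖D v_h‖`, and `a(v,v) ≥ qmin ‖D v‖²`, then `a` is `G_h`-elliptic
with respect to the `H(div)` norm `(‖v‖² + ‖D v‖²)^{1/2}`, with ellipticity
constant independent of `h`. Here `Hf` plays the role of `L²(Ω)^d`, `Hs` of
`L²(Ω)` and `D` of the divergence operator. -/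
theorem discrete_uniform_ellipticity
    {Hf Hs : Type*} [NormedAddCommGroup Hf] [InnerProductSpace ℂ Hf]
    [NormedAddCommGroup Hs] [InnerProductSpace ℂ Hs]
    (D : Hf →ₗ[ℂ] Hs)
    (Gh : ℝ → Submodule ℂ Hf)
    (a : Hf → Hf → ℂ) (qmin : ℝ) (hqmin : 0 < qmin)
    (ha : ∀ v : Hf, qmin * ‖D v‖ ^ 2 ≤ (a v v).re)
    (C s : ℝ) (hC : 0 < C) (hs : 0 < s)
    (hdecomp : ∀ h ∈ Set.Ioc (0 : ℝ) 1, ∀ v ∈ Gh h,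
      ∃ w χ : Hf, v = w + χ ∧ D χ = 0 ∧
        ‖w‖ ≤ C * ‖D v‖ ∧ ‖χ‖ ≤ C * h ^ s * ‖D v‖) :
    ∃ c > 0, ∀ h ∈ Set.Ioc (0 : ℝ) 1, ∀ v ∈ Gh h,
      c * (‖v‖ ^ 2 + ‖D v‖ ^ 2) ≤ (a v v).re :=
  discrete_uniform_ellipticity_general D Gh a qmin hqmin ha C s hs hdecomp
end
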